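/- The minimum cardinality of a generating subset of the multiplicative semigroup A^+(B_2) is 4; explicitly, {(1,2;σ), (2,1;id), ξ_{(1,1)}, ((1,1)→(1,1))}, where σ is the transposition (1 2), is a minimum generating set. -/

import Mathlib

def Bn (n : ℕ) : Type := Option (Fin n × Fin n)

def Bn.mul {n : ℕ} : Bn n → Bn n → Bn n
  | some (i, j), some (k, l) => if j = k then some (i, l) else none
  | _, _ => none

instance (n : ℕ) : Mul (Bn n) := ⟨Bn.mul⟩

instance (n : ℕ) : Semigroup (Bn n) where
  mul_assoc a b c := by
    show Bn.mul (Bn.mul a b) c = Bn.mul a (Bn.mul b c)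
    have e : ∀ i j k l : Fin n, Bn.mul (some (i, j)) (some (k, l)) =
        if j = k then some (i, l) else none := fun _ _ _ _ => rfl
    rcases a with _ | ⟨i, j⟩ <;> rcases b with _ | ⟨k, l⟩ <;> rcases c with _ | ⟨p, q⟩ <;>
      try rfl
    · rw [e i j k l]
      split_ifs <;> rfl
    · rw [e i j k l, e k l p q]
      by_cases h1 : j = k <;> by_cases h2 : l = p
      · rw [if_pos h1, if_pos h2, e, e, if_pos h2, if_pos h1]
      · rw [if_pos h1, if_neg h2, e, if_neg h2]; rfl
      · rw [if_neg h1, if_pos h2, e, if_neg h1]; rfl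
      · rw [if_neg h1, if_neg h2]; rfl

/-- Maps on `Bn n`, composed left-to-right: `x (f * g) = (x f) g`. -/
def MapBn (n : ℕ) : Type := Bn n → Bn n

instance (n : ℕ) : Monoid (MapBn n) where
  mul f g := fun x => g (f x)
  one := fun x => x
  mul_assoc _ _ _ := rfl
  one_mul _ := rfl
  mul_one _ := rfl

/-- The constant map `ξ_c`. -/
def constMap (n : ℕ) (c : Bn n) : MapBn n := fun _ => c

/-- The `n`-support map `(p, q; σ)`, sending `(i, p) ↦ (iσ, q)` and all else to `θ`. -/
def nSuppMap (n : ℕ) (p q : Fin n) (σ : Equiv.Perm (Fin n)) : MapBn n :=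
  fun x =>
    match x with
    | some (i, j) => if j = p then some (σ i, q) else none
    | none => none

instance (n : ℕ) : DecidableEq (Bn n) :=
  inferInstanceAs (DecidableEq (Option (Fin n × Fin n)))

/-- The singleton-support map `((k,l) → (p,q))`. -/
def sglMap (n : ℕ) (k l p q : Fin n) : MapBn n :=
  fun x => @ite _ (x = some (k, l)) (instDecidableEqBn n x (some (k, l))) (some (p, q)) none

/-- The multiplicative semigroup reduct `A⁺(Bₙ)`, as a set of maps on `Bn n`. -/
def APlus (n : ℕ) : Set (MapBn n) :=
  {f | (∃ c, f = constMap n c) ∨ (∃ p q σ, f = nSuppMap n p q σ) ∨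
       (∃ k l p q, f = sglMap n k l p q)}

/-- Independence of a subset of a semigroup. -/
def IndependentIn {S : Type*} [Semigroup S] (U : Set S) : Prop :=
  ∀ a ∈ U, a ∉ Subsemigroup.closure (U \ {a})

/-!
Products in `A⁺(Bₙ)` follow a Brandt-type table: constants absorb on the right and
`ξ_c * f = ξ_{cf}`, two `n`-support maps compose to an `n`-support map or to `ξ_θ`, and a product
involving a singleton-support map is a singleton-support map or `ξ_θ`; an `n`-support map
`(p, q; σ)` keeps its source column `p` when multiplied on the right. So the non-zero elements fall
into `n + 2` disjoint kinds (non-zero constants, singleton-support maps, and for each column `j`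
the `n`-support maps with source column `j`) such that the elements not of a given kind lie in a
subsemigroup that avoids that kind. A generating set therefore meets every kind and has at least `n + 2` elements.
Conversely, for `n = 2` the maps `(1,2;σ)` and `(2,1;id)` generate all `2`-support maps, and
multiplying `ξ_{(1,1)}` and `((1,1)→(1,1))` by these on the right, resp. on both sides, gives every
constant and every singleton-support map.
-/

theorem card_le_ncard_of_closure_eq {M ι : Type*} [Mul M] {A U : Set M}
    (hU : (Subsemigroup.closure U : Set M) = A) (hUfin : U.Finite) (T : ι → Subsemigroup M)
    (hT : ∀ i, ¬A ⊆ T i) (hA : ∀ a ∈ A, ∃ i₀, ∀ i ≠ i₀, a ∈ T i) : Nat.card ι ≤ U.ncard := by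
  have hmeet : ∀ i, ∃ u ∈ U, u ∉ T i := fun i => by
    by_contra! h
    exact hT i (hU ▸ Subsemigroup.closure_le.2 h)
  choose u huU huT using hmeet
  have hinj : Function.Injective u := fun i j hij => by
    obtain ⟨i₀, hi₀⟩ := hA (u i) (hU ▸ Subsemigroup.subset_closure (huU i))
    by_contra hne
    rcases eq_or_ne i i₀ with rfl | hi
    · exact huT j (hij ▸ hi₀ j (Ne.symm hne))
    · exact huT i (hi₀ i hi)
  rw [← Set.ncard_range_of_injective hinj]
  exact Set.ncard_le_ncard (Set.range_subset_iff.2 huU) hUfin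

namespace MapBn

variable {n : ℕ}

theorem mul_eq_of_apply {f g h : MapBn n} (h₀ : g (f none) = h none)
    (hs : ∀ i j, g (f (some (i, j))) = h (some (i, j))) : f * g = h := by
  funext x
  rcases x with _ | ⟨i, j⟩
  exacts [h₀, hs i j]

instance : Finite (MapBn n) :=
  haveI : Finite (Bn n) := inferInstanceAs (Finite (Option (Fin n × Fin n)))
  inferInstanceAs (Finite (Bn n → Bn n))

end MapBn

section Rules

variable {n : ℕ}

open MapBn

theorem nSuppMap_some_self (p q : Fin n) (σ : Equiv.Perm (Fin n)) (i : Fin n) :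
    nSuppMap n p q σ (some (i, p)) = some (σ i, q) := if_pos rfl

theorem nSuppMap_some_of_ne {p j : Fin n} (q : Fin n) (σ : Equiv.Perm (Fin n)) (i : Fin n)
    (h : j ≠ p) : nSuppMap n p q σ (some (i, j)) = none := if_neg h

theorem sglMap_none (k l p q : Fin n) : sglMap n k l p q none = none := if_neg nofun

theorem sglMap_some_self (k l p q : Fin n) : sglMap n k l p q (some (k, l)) = some (p, q) :=
  if_pos rfl

theorem sglMap_some_of_ne {i j k l : Fin n} (p q : Fin n) (h : (i, j) ≠ (k, l)) :
    sglMap n k l p q (some (i, j)) = none :=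
  if_neg (Option.some_injective _ |>.ne h)

theorem constMap_mul (c : Bn n) (f : MapBn n) : constMap n c * f = constMap n (f c) := rfl

theorem mul_constMap (f : MapBn n) (c : Bn n) : f * constMap n c = constMap n c := rfl

theorem nSuppMap_mul_nSuppMap (p q p' q' : Fin n) (σ τ : Equiv.Perm (Fin n)) :
    nSuppMap n p q σ * nSuppMap n p' q' τ =
      if q = p' then nSuppMap n p q' (τ * σ) else constMap n none := by
  split_ifs with hq
  all_goals refine mul_eq_of_apply rfl fun i j => ?_
  all_goals by_cases hj : j = p
  · subst hq hj
    rw [nSuppMap_some_self, nSuppMap_some_self, nSuppMap_some_self]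
    rfl
  · rw [nSuppMap_some_of_ne _ _ _ hj, nSuppMap_some_of_ne _ _ _ hj]
    rfl
  · subst hj
    rw [nSuppMap_some_self, nSuppMap_some_of_ne _ _ _ hq]
    rfl
  · rw [nSuppMap_some_of_ne _ _ _ hj]
    rfl

theorem nSuppMap_mul_sglMap (p q k l p' q' : Fin n) (σ : Equiv.Perm (Fin n)) :
    nSuppMap n p q σ * sglMap n k l p' q' =
      if q = l then sglMap n (σ⁻¹ k) p p' q' else constMap n none := by
  split_ifs with hq
  all_goals refine mul_eq_of_apply (sglMap_none ..) fun i j => ?_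
  all_goals by_cases hj : j = p
  · subst hq hj
    rw [nSuppMap_some_self]
    by_cases hi : σ i = k
    · obtain rfl : i = σ⁻¹ k := Equiv.Perm.eq_inv_iff_eq.2 hi
      rw [hi, sglMap_some_self, sglMap_some_self]
    · rw [sglMap_some_of_ne _ _ (by simpa using hi),
        sglMap_some_of_ne _ _ fun h => hi (Equiv.Perm.eq_inv_iff_eq.1 (Prod.ext_iff.1 h).1)]
  · rw [nSuppMap_some_of_ne _ _ _ hj, sglMap_none, sglMap_some_of_ne _ _ (by simp [hj])]
  · subst hj
    rw [nSuppMap_some_self, sglMap_some_of_ne _ _ (by simp [hq])]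
    rfl
  · rw [nSuppMap_some_of_ne _ _ _ hj, sglMap_none]
    rfl

theorem sglMap_mul_nSuppMap (k l p q p' q' : Fin n) (σ : Equiv.Perm (Fin n)) :
    sglMap n k l p q * nSuppMap n p' q' σ =
      if q = p' then sglMap n k l (σ p) q' else constMap n none := by
  split_ifs with hq
  all_goals refine mul_eq_of_apply (by rw [sglMap_none]; rfl) fun i j => ?_
  all_goals by_cases hij : (i, j) = (k, l)
  · subst hq
    obtain ⟨rfl, rfl⟩ := Prod.ext_iff.1 hij
    rw [sglMap_some_self, sglMap_some_self, nSuppMap_some_self]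
  · rw [sglMap_some_of_ne _ _ hij, sglMap_some_of_ne _ _ hij]
    rfl
  · obtain ⟨rfl, rfl⟩ := Prod.ext_iff.1 hij
    rw [sglMap_some_self, nSuppMap_some_of_ne _ _ _ hq]
    rfl
  · rw [sglMap_some_of_ne _ _ hij]
    rfl

theorem sglMap_mul_sglMap (k l p q k' l' p' q' : Fin n) :
    sglMap n k l p q * sglMap n k' l' p' q' =
      if p = k' ∧ q = l' then sglMap n k l p' q' else constMap n none := by
  split_ifs with hpq
  all_goals refine mul_eq_of_apply (by rw [sglMap_none, sglMap_none]; rfl) fun i j => ?_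
  all_goals by_cases hij : (i, j) = (k, l)
  · obtain ⟨rfl, rfl⟩ := hpq
    obtain ⟨rfl, rfl⟩ := Prod.ext_iff.1 hij
    rw [sglMap_some_self, sglMap_some_self, sglMap_some_self]
  · rw [sglMap_some_of_ne _ _ hij, sglMap_some_of_ne _ _ hij, sglMap_none]
  · obtain ⟨rfl, rfl⟩ := Prod.ext_iff.1 hij
    rw [sglMap_some_self, sglMap_some_of_ne _ _ (by simpa using hpq)]
    rfl
  · rw [sglMap_some_of_ne _ _ hij, sglMap_none]
    rfl

end Rules

section APlus

variable {n : ℕ}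

theorem constMap_mem_APlus (c : Bn n) : constMap n c ∈ APlus n := Or.inl ⟨c, rfl⟩

theorem nSuppMap_mem_APlus (p q : Fin n) (σ : Equiv.Perm (Fin n)) :
    nSuppMap n p q σ ∈ APlus n :=
  Or.inr (Or.inl ⟨p, q, σ, rfl⟩)

theorem sglMap_mem_APlus (k l p q : Fin n) : sglMap n k l p q ∈ APlus n :=
  Or.inr (Or.inr ⟨k, l, p, q, rfl⟩)

variable (n) in
def APlus.subsemigroup : Subsemigroup (MapBn n) where
  carrier := APlus n
  mul_mem' := by
    rintro _ _ (⟨c, rfl⟩ | ⟨p, q, σ, rfl⟩ | ⟨k, l, p, q, rfl⟩)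
      (⟨c', rfl⟩ | ⟨p', q', τ, rfl⟩ | ⟨k', l', p', q', rfl⟩) <;>
    simp only [constMap_mul, mul_constMap, nSuppMap_mul_nSuppMap, nSuppMap_mul_sglMap,
      sglMap_mul_nSuppMap, sglMap_mul_sglMap] <;>
    (try split_ifs) <;>
    first
      | exact constMap_mem_APlus _
      | exact nSuppMap_mem_APlus _ _ _
      | exact sglMap_mem_APlus _ _ _ _

end APlus

section LowerBound

variable {n : ℕ}

theorem sglMap_ne_constMap (k l p q : Fin n) (c : Bn n) : sglMap n k l p q ≠ constMap n c := by
  intro h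
  have h₀ : none = c := (sglMap_none k l p q).symm.trans (congrFun h none)
  have h₁ : some (p, q) = c := by rw [← sglMap_some_self k l p q, h]; rfl
  exact Option.some_ne_none _ (h₁.trans h₀.symm)

theorem nSuppMap_ne_constMap (p q : Fin n) (σ : Equiv.Perm (Fin n)) (c : Bn n) :
    nSuppMap n p q σ ≠ constMap n c := by
  intro h
  have h₀ : none = c := congrFun h none
  have h₁ : some (σ p, q) = c := by rw [← nSuppMap_some_self p q σ p, h]; rfl
  exact Option.some_ne_none _ (h₁.trans h₀.symm)

theorem nSuppMap_ne_nSuppMap {p p' : Fin n} (q q' : Fin n) (σ τ : Equiv.Perm (Fin n))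
    (h : p ≠ p') : nSuppMap n p q σ ≠ nSuppMap n p' q' τ := by
  intro e
  have := congrFun e (some (p, p))
  rw [nSuppMap_some_self, nSuppMap_some_of_ne _ _ _ h] at this
  exact Option.some_ne_none _ this

theorem sglMap_ne_nSuppMap [Nontrivial (Fin n)] (k l p q p' q' : Fin n)
    (σ : Equiv.Perm (Fin n)) : sglMap n k l p q ≠ nSuppMap n p' q' σ := by
  intro e
  obtain ⟨i, hi⟩ := exists_ne k
  have := congrFun e (some (i, p'))
  rw [sglMap_some_of_ne _ _ (by simp [hi]), nSuppMap_some_self] at this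
  exact Option.some_ne_none _ this.symm

variable (n)

def thetaFixing : Subsemigroup (MapBn n) where
  carrier := {f | f none = none}
  mul_mem' {f g} hf hg := show g (f none) = none by rw [show f none = none from hf]; exact hg

def constOrSupp : Subsemigroup (MapBn n) where
  carrier := {f | (∃ c, f = constMap n c) ∨ ∃ p q σ, f = nSuppMap n p q σ}
  mul_mem' := by
    rintro _ _ (⟨c, rfl⟩ | ⟨p, q, σ, rfl⟩) (⟨c', rfl⟩ | ⟨p', q', τ, rfl⟩)
    · exact Or.inl ⟨_, rfl⟩
    · exact Or.inl ⟨_, constMap_mul _ _⟩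
    · exact Or.inl ⟨_, rfl⟩
    · rw [nSuppMap_mul_nSuppMap]
      split_ifs
      exacts [Or.inr ⟨_, _, _, rfl⟩, Or.inl ⟨_, rfl⟩]

def offColumn (j : Fin n) : Subsemigroup (MapBn n) where
  carrier := {f | (∃ c, f = constMap n c) ∨ (∃ k l p q, f = sglMap n k l p q) ∨
    ∃ p q σ, p ≠ j ∧ f = nSuppMap n p q σ}
  mul_mem' := by
    rintro _ _ (⟨c, rfl⟩ | ⟨k, l, p, q, rfl⟩ | ⟨p, q, σ, hp, rfl⟩)
      (⟨c', rfl⟩ | ⟨k', l', p', q', rfl⟩ | ⟨p', q', τ, -, rfl⟩) <;>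
    simp only [constMap_mul, mul_constMap, nSuppMap_mul_nSuppMap, nSuppMap_mul_sglMap,
      sglMap_mul_nSuppMap, sglMap_mul_sglMap] <;>
    (try split_ifs) <;>
    first
      | exact Or.inl ⟨_, rfl⟩
      | exact Or.inr (Or.inl ⟨_, _, _, _, rfl⟩)
      | exact Or.inr (Or.inr ⟨_, _, _, hp, rfl⟩)

/-- `APlus.avoid n i` contains every element of `APlus n` except those of kind `i`, where `none`
indexes the non-zero constants, `some none` the singleton-support maps and `some (some j)` the
`n`-support maps with source column `j`. -/
def APlus.avoid : Option (Option (Fin n)) → Subsemigroup (MapBn n)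
  | none => thetaFixing n
  | some none => constOrSupp n
  | some (some j) => offColumn n j

variable {n}

theorem APlus.not_subset_avoid [Nontrivial (Fin n)] (i : Option (Option (Fin n))) :
    ¬APlus n ⊆ APlus.avoid n i := by
  obtain ⟨a, -⟩ := exists_pair_ne (Fin n)
  intro h
  rcases i with _ | _ | j
  · exact Option.some_ne_none _ (h (constMap_mem_APlus (some (a, a))))
  · rcases h (sglMap_mem_APlus a a a a) with ⟨c, hc⟩ | ⟨p, q, σ, hpq⟩
    exacts [sglMap_ne_constMap _ _ _ _ _ hc, sglMap_ne_nSuppMap _ _ _ _ _ _ _ hpq]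
  · rcases h (nSuppMap_mem_APlus j j 1) with ⟨c, hc⟩ | ⟨k, l, p, q, hkl⟩ | ⟨p, q, σ, hp, hpq⟩
    · exact nSuppMap_ne_constMap _ _ _ _ hc
    · exact sglMap_ne_nSuppMap _ _ _ _ _ _ _ hkl.symm
    · exact nSuppMap_ne_nSuppMap _ _ _ _ hp.symm hpq

theorem APlus.exists_forall_ne_mem_avoid {f : MapBn n} (hf : f ∈ APlus n) :
    ∃ i₀, ∀ i ≠ i₀, f ∈ APlus.avoid n i := by
  rcases hf with ⟨c, rfl⟩ | ⟨p, q, σ, rfl⟩ | ⟨k, l, p, q, rfl⟩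
  · refine ⟨none, fun i hi => ?_⟩
    rcases i with _ | _ | j
    exacts [absurd rfl hi, Or.inl ⟨c, rfl⟩, Or.inl ⟨c, rfl⟩]
  · refine ⟨some (some p), fun i hi => ?_⟩
    rcases i with _ | _ | j
    · rfl
    · exact Or.inr ⟨p, q, σ, rfl⟩
    · exact Or.inr (Or.inr ⟨p, q, σ, fun h => hi (h ▸ rfl), rfl⟩)
  · refine ⟨some none, fun i hi => ?_⟩
    rcases i with _ | _ | j
    exacts [sglMap_none k l p q, absurd rfl hi, Or.inr (Or.inl ⟨k, l, p, q, rfl⟩)]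

theorem APlus.add_two_le_ncard [Nontrivial (Fin n)] {U : Set (MapBn n)}
    (hU : (Subsemigroup.closure U : Set (MapBn n)) = APlus n) : n + 2 ≤ U.ncard := by
  have := card_le_ncard_of_closure_eq hU U.toFinite (APlus.avoid n) APlus.not_subset_avoid
    fun _ => APlus.exists_forall_ne_mem_avoid
  rwa [Finite.card_option, Finite.card_option, Nat.card_fin] at this

end LowerBound

section Generation

variable {n : ℕ} {S : Subsemigroup (MapBn n)}

theorem constMap_mem_of_nSuppMap_mem [Nontrivial (Fin n)]
    (hS : ∀ p q σ, nSuppMap n p q σ ∈ S) {i j : Fin n} (hc : constMap n (some (i, j)) ∈ S)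
    (c : Bn n) : constMap n c ∈ S := by
  rcases c with _ | ⟨x, y⟩
  · obtain ⟨p, hp⟩ := exists_ne j
    have := mul_mem hc (hS p j 1)
    rwa [constMap_mul (some (i, j)), nSuppMap_some_of_ne _ _ _ hp.symm] at this
  · have := mul_mem hc (hS j y (Equiv.swap i x))
    rwa [constMap_mul (some (i, j)), nSuppMap_some_self, Equiv.swap_apply_left] at this

theorem sglMap_mem_of_nSuppMap_mem (hS : ∀ p q σ, nSuppMap n p q σ ∈ S) {i j i' j' : Fin n}
    (hd : sglMap n i j i' j' ∈ S) (k l p q : Fin n) : sglMap n k l p q ∈ S := by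
  have := mul_mem (mul_mem (hS l j (Equiv.swap k i)) hd) (hS j' q (Equiv.swap i' p))
  rwa [nSuppMap_mul_sglMap, if_pos rfl, sglMap_mul_nSuppMap, if_pos rfl, Equiv.swap_inv,
    Equiv.swap_apply_right, Equiv.swap_apply_left] at this

theorem APlus_subset_of_nSuppMap_mem [Nontrivial (Fin n)]
    (hS : ∀ p q σ, nSuppMap n p q σ ∈ S) {i j : Fin n} (hc : constMap n (some (i, j)) ∈ S)
    {k l p q : Fin n} (hd : sglMap n k l p q ∈ S) : APlus n ⊆ S := by
  rintro _ (⟨c, rfl⟩ | ⟨p, q, σ, rfl⟩ | ⟨k, l, p, q, rfl⟩)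
  exacts [constMap_mem_of_nSuppMap_mem hS hc c, hS p q σ, sglMap_mem_of_nSuppMap_mem hS hd k l p q]

theorem nSuppMap_two_mem {S : Subsemigroup (MapBn 2)}
    (ha : nSuppMap 2 0 1 (Equiv.swap 0 1) ∈ S) (hb : nSuppMap 2 1 0 1 ∈ S)
    (p q : Fin 2) (σ : Equiv.Perm (Fin 2)) : nSuppMap 2 p q σ ∈ S := by
  have hs : nSuppMap 2 0 0 (Equiv.swap 0 1) ∈ S := by
    simpa [nSuppMap_mul_nSuppMap] using mul_mem ha hb
  have h1 : nSuppMap 2 0 0 1 ∈ S := by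
    simpa [nSuppMap_mul_nSuppMap] using mul_mem hs hs
  have hdiag : ∀ σ, nSuppMap 2 0 0 σ ∈ S := by
    intro σ
    rcases (by decide : ∀ σ : Equiv.Perm (Fin 2), σ = 1 ∨ σ = Equiv.swap 0 1) σ with rfl | rfl
    exacts [h1, hs]
  have hin : ∀ p, nSuppMap 2 p 0 1 ∈ S := Fin.forall_fin_two.2 ⟨h1, hb⟩
  have hout : ∀ q, nSuppMap 2 0 q 1 ∈ S :=
    Fin.forall_fin_two.2 ⟨h1, by simpa [nSuppMap_mul_nSuppMap] using mul_mem hs ha⟩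
  simpa [nSuppMap_mul_nSuppMap] using mul_mem (mul_mem (hin p) (hdiag σ)) (hout q)

end Generation

theorem closure_generators_eq_APlus_two :
    (Subsemigroup.closure ({nSuppMap 2 0 1 (Equiv.swap 0 1), nSuppMap 2 1 0 1,
      constMap 2 (some (0, 0)), sglMap 2 0 0 0 0} : Set (MapBn 2)) : Set (MapBn 2)) =
      APlus 2 := by
  refine subset_antisymm (Subsemigroup.closure_le (S := APlus.subsemigroup 2) |>.2 ?_)
    (APlus_subset_of_nSuppMap_mem (nSuppMap_two_mem ?_ ?_) (i := 0) (j := 0) ?_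
      (k := 0) (l := 0) (p := 0) (q := 0) ?_)
  · simp only [Set.insert_subset_iff, Set.singleton_subset_iff]
    exact ⟨nSuppMap_mem_APlus .., nSuppMap_mem_APlus .., constMap_mem_APlus _,
      sglMap_mem_APlus ..⟩
  all_goals exact Subsemigroup.subset_closure (by simp)

theorem lower_rank_APlus_two :
    let Q : Set (MapBn 2) := {nSuppMap 2 0 1 (Equiv.swap 0 1), nSuppMap 2 1 0 1,
      constMap 2 (some (0, 0)), sglMap 2 0 0 0 0}
    (Subsemigroup.closure Q : Set (MapBn 2)) = APlus 2 ∧ Q.ncard = 4 ∧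
    sInf {k | ∃ U : Set (MapBn 2), U ⊆ APlus 2 ∧ U.ncard = k ∧
      (Subsemigroup.closure U : Set (MapBn 2)) = APlus 2} = 4 := by
  intro Q
  have hQ : (Subsemigroup.closure Q : Set (MapBn 2)) = APlus 2 :=
    closure_generators_eq_APlus_two
  have hQcard : Q.ncard = 4 := by
    refine le_antisymm ?_ (APlus.add_two_le_ncard hQ)
    refine (Set.ncard_insert_le _ _).trans (Nat.succ_le_succ ?_)
    refine (Set.ncard_insert_le _ _).trans (Nat.succ_le_succ ?_)
    exact (Set.ncard_insert_le _ _).trans (by rw [Set.ncard_singleton])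
  have hmem : 4 ∈ {k | ∃ U : Set (MapBn 2), U ⊆ APlus 2 ∧ U.ncard = k ∧
      (Subsemigroup.closure U : Set (MapBn 2)) = APlus 2} :=
    ⟨Q, hQ ▸ Subsemigroup.subset_closure, hQcard, hQ⟩
  refine ⟨hQ, hQcard, le_antisymm (Nat.sInf_le hmem) (le_csInf ⟨4, hmem⟩ ?_)⟩
  rintro k ⟨U, -, rfl, hU⟩
  exact APlus.add_two_le_ncard hU
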